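/- Probabilistic soundness and completeness of mb*: for any set Γ of mb*-formulas and any mb*-formula φ, Γ ⊢ φ in mb* if and only if Γ ⊩_P φ, i.e., if and only if for every mb*-probability function P, P(φ) = 1 whenever P(ψ) = 1 for every ψ ∈ Γ. -/
import Mathlib


/-- Formulas of the logic mb*, built from countably many propositional
variables via ∧ (`conj`), ∨ (`disj`), → (`impl`), ¬ (`neg`) and ★ (`star`). -/
inductive MbF : Type
  | var : ℕ → MbF
  | conj : MbF → MbF → MbF
  | disj : MbF → MbF → MbF
  | impl : MbF → MbF → MbF
  | neg : MbF → MbF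
  | star : MbF → MbF

/-- Axiom schemas of the Hilbert-style presentation of mb*. -/
inductive MbAxiom : MbF → Prop
  | ax1 (α β : MbF) : MbAxiom (.impl α (.impl β α))
  | ax2 (α β γ : MbF) :
      MbAxiom (.impl (.impl α β) (.impl (.impl α (.impl β γ)) (.impl α γ)))
  | ax3 (α β : MbF) : MbAxiom (.impl α (.impl β (.conj α β)))
  | ax4 (α β : MbF) : MbAxiom (.impl (.conj α β) α)
  | ax5 (α β : MbF) : MbAxiom (.impl (.conj α β) β)
  | ax6 (α β : MbF) : MbAxiom (.impl α (.disj α β))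
  | ax7 (α β : MbF) : MbAxiom (.impl β (.disj α β))
  | ax8 (α β γ : MbF) :
      MbAxiom (.impl (.impl α γ) (.impl (.impl β γ) (.impl (.disj α β) γ)))
  | ax9 (α β : MbF) : MbAxiom (.disj α (.impl α β))
  | ax10 (α β : MbF) : MbAxiom (.impl α (.impl (.neg α) β))
  | ax11 (α : MbF) : MbAxiom (.disj α (.disj (.neg α) (.star α)))

/-- Derivability in mb*: `MbDeriv Γ φ` means Γ ⊢ φ, i.e. φ has a derivation
from Γ using axiom instances, members of Γ, and modus ponens. -/
inductive MbDeriv (Γ : Set MbF) : MbF → Prop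
  | ax {φ : MbF} : MbAxiom φ → MbDeriv Γ φ
  | hyp {φ : MbF} : φ ∈ Γ → MbDeriv Γ φ
  | mp {φ ψ : MbF} : MbDeriv Γ (.impl φ ψ) → MbDeriv Γ φ → MbDeriv Γ ψ

/-- An mb*-valuation: a two-valued map satisfying the semantic clauses of mb*. -/
def IsMbVal (v : MbF → Fin 2) : Prop :=
  (∀ α β : MbF, v (.disj α β) = 1 ↔ v α = 1 ∨ v β = 1) ∧
  (∀ α β : MbF, v (.conj α β) = 1 ↔ v α = 1 ∧ v β = 1) ∧
  (∀ α β : MbF, v (.impl α β) = 1 ↔ v α = 0 ∨ v β = 1) ∧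
  (∀ α : MbF, v α = 1 → v (.neg α) = 0) ∧
  (∀ α : MbF, v α = 0 → v (.neg α) = 0 → v (.star α) = 1)

/-- An mb*-probability function: a `[0,1]`-valued function on formulas
satisfying tautologicity, antitautologicity, comparison and finite additivity. -/
def IsMbProb (P : MbF → ℝ) : Prop :=
  (∀ φ : MbF, P φ ∈ Set.Icc (0 : ℝ) 1) ∧
  (∀ φ : MbF, MbDeriv ∅ φ → P φ = 1) ∧
  (∀ φ : MbF, (∀ ψ : MbF, MbDeriv {φ} ψ) → P φ = 0) ∧
  (∀ φ ψ : MbF, MbDeriv {ψ} φ → P ψ ≤ P φ) ∧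
  (∀ φ ψ : MbF, P (.disj φ ψ) = P φ + P ψ - P (.conj φ ψ))


section MbAux

open MbF

/-- Monotonicity of derivability. -/
lemma MbDeriv.mono {Γ Δ : Set MbF} {φ : MbF} (h : MbDeriv Γ φ) (hsub : Γ ⊆ Δ) :
    MbDeriv Δ φ := by
  induction h with
  | ax ha => exact .ax ha
  | hyp hm => exact .hyp (hsub hm)
  | mp _ _ ih1 ih2 => exact .mp ih1 ih2

/-- α → α is derivable. -/
lemma mb_id (Γ : Set MbF) (α : MbF) : MbDeriv Γ (.impl α α) :=
  .mp (.mp (.ax (.ax2 α (.impl α α) α)) (.ax (.ax1 α α))) (.ax (.ax1 α (.impl α α)))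

/-- Deduction theorem. -/
lemma mb_deduction {Γ : Set MbF} {α β : MbF} (h : MbDeriv (insert α Γ) β) :
    MbDeriv Γ (.impl α β) := by
  induction h with
  | ax ha => exact .mp (.ax (.ax1 _ α)) (.ax ha)
  | @hyp ψ hm =>
      rcases hm with h | h
      · subst h; exact mb_id Γ _
      · exact .mp (.ax (.ax1 _ α)) (.hyp h)
  | @mp χ ψ _ _ ih1 ih2 =>
      exact .mp (.mp (.ax (.ax2 α χ ψ)) ih2) ih1

/-- Cut. -/
lemma mb_cut {Γ : Set MbF} {α β : MbF} (hα : MbDeriv Γ α)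
    (h : MbDeriv (insert α Γ) β) : MbDeriv Γ β :=
  .mp (mb_deduction h) hα

/-- Compactness: derivations use finitely many hypotheses. -/
lemma mb_compact {Γ : Set MbF} {φ : MbF} (h : MbDeriv Γ φ) :
    ∃ s : Finset MbF, ↑s ⊆ Γ ∧ MbDeriv ↑s φ := by
  induction h with
  | ax ha => exact ⟨∅, by simp, .ax ha⟩
  | @hyp ψ hm => exact ⟨{ψ}, by simpa, .hyp (by simp)⟩
  | @mp χ ψ _ _ ih1 ih2 =>
      obtain ⟨s1, hs1, hd1⟩ := ih1
      obtain ⟨s2, hs2, hd2⟩ := ih2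
      classical
      refine ⟨s1 ∪ s2, ?_, .mp (hd1.mono ?_) (hd2.mono ?_)⟩
      · rw [Finset.coe_union]; exact Set.union_subset hs1 hs2
      · rw [Finset.coe_union]; exact Set.subset_union_left
      · rw [Finset.coe_union]; exact Set.subset_union_right

/-- A finite set contained in the union of a nonempty chain lies in one member. -/
lemma finset_subset_chain {c : Set (Set MbF)} (hc : IsChain (· ⊆ ·) c)
    (hne : c.Nonempty) (s : Finset MbF) (hs : ↑s ⊆ ⋃₀ c) :
    ∃ Δ ∈ c, ↑s ⊆ Δ := by
  classical
  induction s using Finset.induction_on with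
  | empty => exact ⟨hne.choose, hne.choose_spec, by simp⟩
  | @insert a s ha ih =>
      have hsub : ↑s ⊆ ⋃₀ c := by
        refine subset_trans ?_ hs; simp [Finset.coe_insert, Set.subset_insert]
      obtain ⟨Δ1, hΔ1, h1⟩ := ih hsub
      have hamem : a ∈ ⋃₀ c := hs (by simp)
      obtain ⟨Δ2, hΔ2, h2⟩ := hamem
      rcases eq_or_ne Δ1 Δ2 with rfl | hne'
      · exact ⟨Δ1, hΔ1, by simp [Finset.coe_insert, Set.insert_subset_iff, h2, h1]⟩
      · rcases hc hΔ1 hΔ2 hne' with h | h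
        · exact ⟨Δ2, hΔ2, by
            simp only [Finset.coe_insert, Set.insert_subset_iff]
            exact ⟨h2, subset_trans h1 h⟩⟩
        · exact ⟨Δ1, hΔ1, by
            simp only [Finset.coe_insert, Set.insert_subset_iff]
            exact ⟨h h2, h1⟩⟩

/-- Lindenbaum: extend a non-deriving set to a maximal one. -/
lemma mb_lindenbaum {Γ : Set MbF} {φ : MbF} (h : ¬ MbDeriv Γ φ) :
    ∃ Δ : Set MbF, Γ ⊆ Δ ∧ ¬ MbDeriv Δ φ ∧
      ∀ ψ, ψ ∉ Δ → MbDeriv (insert ψ Δ) φ := by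
  classical
  set S : Set (Set MbF) := {Δ | Γ ⊆ Δ ∧ ¬ MbDeriv Δ φ} with hS
  have hZ : ∀ c ⊆ S, IsChain (· ⊆ ·) c → c.Nonempty →
      ∃ ub ∈ S, ∀ s ∈ c, s ⊆ ub := by
    intro c hcS hchain hcne
    refine ⟨⋃₀ c, ⟨?_, ?_⟩, fun s hs => Set.subset_sUnion_of_mem hs⟩
    · obtain ⟨Δ0, hΔ0⟩ := hcne
      exact subset_trans (hcS hΔ0).1 (Set.subset_sUnion_of_mem hΔ0)
    · intro hd
      obtain ⟨s, hs, hds⟩ := mb_compact hd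
      obtain ⟨Δ0, hΔ0, hsΔ0⟩ := finset_subset_chain hchain hcne s hs
      exact (hcS hΔ0).2 (hds.mono hsΔ0)
  obtain ⟨Δ, hsub, hmax⟩ := zorn_subset_nonempty S hZ Γ ⟨subset_rfl, h⟩
  refine ⟨Δ, hmax.1.1, hmax.1.2, fun ψ hψ => ?_⟩
  by_contra hnd
  have hmem : insert ψ Δ ∈ S := ⟨subset_trans hmax.1.1 (Set.subset_insert _ _), hnd⟩
  have heq : insert ψ Δ ⊆ Δ := hmax.2 hmem (Set.subset_insert _ _)
  exact hψ (heq (Set.mem_insert _ _))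

/-- Probabilistic modus ponens. -/
lemma mb_prob_mp {P : MbF → ℝ} (hP : IsMbProb P) {α β : MbF}
    (h1 : P (.impl α β) = 1) (h2 : P α = 1) : P β = 1 := by
  obtain ⟨hIcc, _, _, hcomp, hadd⟩ := hP
  have hd : MbDeriv {MbF.conj α (.impl α β)} β := by
    have hhyp : MbDeriv {MbF.conj α (.impl α β)} (.conj α (.impl α β)) := .hyp rfl
    exact .mp (.mp (.ax (.ax5 α (.impl α β))) hhyp)
      (.mp (.ax (.ax4 α (.impl α β))) hhyp)
  have hle : P (MbF.conj α (.impl α β)) ≤ P β := hcomp _ _ hd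
  have hA := hadd α (.impl α β)
  have h3 := (hIcc (.disj α (.impl α β))).2
  have h4 := (hIcc β).2
  linarith

end MbAux


/-- Probabilistic soundness and completeness of mb*. -/
theorem mb_prob_soundness_completeness (Γ : Set MbF) (φ : MbF) :
    MbDeriv Γ φ ↔
      ∀ P : MbF → ℝ, IsMbProb P → (∀ ψ ∈ Γ, P ψ = 1) → P φ = 1 := by
  constructor
  · intro h P hP hΓ
    induction h with
    | ax ha => exact hP.2.1 _ (.ax ha)
    | hyp hm => exact hΓ _ hm
    | mp _ _ ih1 ih2 => exact mb_prob_mp hP ih1 ih2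
  · intro h
    by_contra hnd
    obtain ⟨Δ, hΓΔ, hΔφ, hmax⟩ := mb_lindenbaum hnd
    -- Δ is deductively closed
    have hcl : ∀ ψ, MbDeriv Δ ψ → ψ ∈ Δ := by
      intro ψ hd
      by_contra hψ
      exact hΔφ (mb_cut hd (hmax ψ hψ))
    have hconj : ∀ α β, MbF.conj α β ∈ Δ ↔ α ∈ Δ ∧ β ∈ Δ := by
      intro α β
      constructor
      · intro hm
        exact ⟨hcl _ (.mp (.ax (.ax4 α β)) (.hyp hm)),
               hcl _ (.mp (.ax (.ax5 α β)) (.hyp hm))⟩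
      · rintro ⟨h1, h2⟩
        exact hcl _ (.mp (.mp (.ax (.ax3 α β)) (.hyp h1)) (.hyp h2))
    have hdisj : ∀ α β, MbF.disj α β ∈ Δ ↔ α ∈ Δ ∨ β ∈ Δ := by
      intro α β
      constructor
      · intro hm
        by_contra hno
        push_neg at hno
        have hαφ : MbDeriv Δ (.impl α φ) := mb_deduction (hmax α hno.1)
        have hβφ : MbDeriv Δ (.impl β φ) := mb_deduction (hmax β hno.2)
        exact hΔφ (.mp (.mp (.mp (.ax (.ax8 α β φ)) hαφ) hβφ) (.hyp hm))
      · rintro (h1 | h1)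
        · exact hcl _ (.mp (.ax (.ax6 α β)) (.hyp h1))
        · exact hcl _ (.mp (.ax (.ax7 α β)) (.hyp h1))
    classical
    set P : MbF → ℝ := fun ψ => if ψ ∈ Δ then 1 else 0 with hPdef
    have hφΔ : φ ∉ Δ := fun hm => hΔφ (.hyp hm)
    have hP : IsMbProb P := by
      refine ⟨?_, ?_, ?_, ?_, ?_⟩
      · intro ψ
        by_cases hm : ψ ∈ Δ <;> simp [hPdef, hm]
      · intro ψ hd
        have : ψ ∈ Δ := hcl _ (hd.mono (Set.empty_subset _))
        simp [hPdef, this]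
      · intro χ hχ
        have hm : χ ∉ Δ := by
          intro hm
          exact hΔφ ((hχ φ).mono (by simpa using hm))
        simp [hPdef, hm]
      · intro χ ψ hd
        by_cases hm : ψ ∈ Δ
        · have : χ ∈ Δ := hcl _ (hd.mono (by simpa using hm))
          simp [hPdef, hm, this]
        · simp only [hPdef, hm, if_neg, if_false]
          by_cases hm2 : χ ∈ Δ <;> simp [hm2]
      · intro α β
        by_cases h1 : α ∈ Δ <;> by_cases h2 : β ∈ Δ <;>
          simp [hPdef, hdisj, hconj, h1, h2]
    have hone := h P hP (fun ψ hψ => by simp [hPdef, hΓΔ hψ])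
    rw [hPdef] at hone
    simp [hφΔ] at hone
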